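/- Rate of change of the volume of an evolving domain: Let d ≥ 1, let ψ : ℝ × ℝ^d → ℝ^d be twice continuously differentiable, and let Y* ⊂ ℝ^d be a bounded measurable set. Assume that for every t the map ψ(t,·) is injective on Y* and det(D_yψ(t,y)) > 0 for all y ∈ Y*. Then the Lebesgue measure Θ(t) of the image set ψ(t, Y*) satisfies Θ(t) = ∫_{Y*} det(D_yψ(t,y)) dy; in particular Θ is differentiable in t with Θ'(t) = ∫_{Y*} div_y( Adj(D_yψ(t,·)) ∂_tψ(t,·) )(y) dy. -/

import Mathlib

open MeasureTheory

/-- The (spatial) Jacobian matrix of a map `f : ℝ^d → ℝ^d` at a point `y`: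
`(jacobian f y) i j = ∂ f_i / ∂ y_j`. -/
noncomputable def jacobian {d : ℕ} (f : (Fin d → ℝ) → (Fin d → ℝ)) (y : Fin d → ℝ) :
    Matrix (Fin d) (Fin d) ℝ :=
  Matrix.of fun i j => fderiv ℝ f y (Pi.single j 1) i

/-- The divergence of a vector field `v : ℝ^d → ℝ^d` at a point `y`:
`∑ i, ∂ v_i / ∂ y_i`. -/
noncomputable def vdiv {d : ℕ} (v : (Fin d → ℝ) → (Fin d → ℝ)) (y : Fin d → ℝ) : ℝ :=
  ∑ i, fderiv ℝ (fun z => v z i) y (Pi.single i 1)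

/-!
By the change of variables formula, `Θ(t) = ∫_{Y*} det D_yψ(t,y) dy`; since `Y*` is bounded and
`ψ` is `C²`, one may differentiate under the integral sign, so `Θ'(t) = ∫_{Y*} ∂_t det D_yψ`.
It remains to identify the integrand pointwise. By Cramer's rule the `i`-th component of
`Adj(D_yψ) ∂_tψ` is the determinant of `D_yψ` with its `i`-th column replaced by `∂_tψ`.
Differentiating these determinants column by column, the terms containing mixed second derivatives
`∂_i ∂_k ψ` cancel in pairs (symmetry of second derivatives against antisymmetry of the
determinant), and what remains is Jacobi's formula for `∂_t det D_yψ`.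
-/

theorem Fintype.sum_sum_eq_zero_of_antisymm {ι R : Type*} [Fintype ι] [NonAssocRing R]
    [NoZeroDivisors R] [CharZero R] {f : ι → ι → R} (hf : ∀ i j, f i j = -f j i) :
    ∑ i, ∑ j, f i j = 0 := by
  refine CharZero.eq_neg_self_iff.mp ?_
  conv_lhs => rw [Finset.sum_comm]
  simp only [← Finset.sum_neg_distrib]
  exact Finset.sum_congr rfl fun j _ => Finset.sum_congr rfl fun i _ => hf i j

namespace Matrix

variable {n R : Type*} [Fintype n] [DecidableEq n] [CommRing R]

theorem det_updateRow_updateRow_swap (M : Matrix n n R) {i j : n} (hij : i ≠ j) (u v : n → R) :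
    ((M.updateRow i u).updateRow j v).det = -((M.updateRow j u).updateRow i v).det := by
  have hswap : ((M.updateRow i u).updateRow j v).submatrix (Equiv.swap i j) id
      = (M.updateRow j u).updateRow i v := by
    ext k l
    rcases eq_or_ne k i with rfl | hki
    · simp [updateRow_apply]
    rcases eq_or_ne k j with rfl | hkj
    · simp [updateRow_apply, hij, hki]
    · simp [updateRow_apply, hki, hkj, Equiv.swap_apply_of_ne_of_ne hki hkj]
  rw [← hswap, det_permute, Equiv.Perm.sign_swap hij]
  simp

theorem sum_det_updateRow_updateRow [NoZeroDivisors R] [CharZero R] (M : Matrix n n R)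
    (b : n → R) (c : n → n → R) (h : n → n → n → R) (hh : ∀ i j, h i j = h j i) :
    ∑ i, ∑ j, ((M.updateRow i b).updateRow j (if j = i then c i else h i j)).det
      = ∑ i, (M.updateRow i (c i)).det := by
  have hsplit : ∀ i j, ((M.updateRow i b).updateRow j (if j = i then c i else h i j)).det
      = (if i = j then (M.updateRow i (c i)).det else 0)
        + if j = i then 0 else ((M.updateRow i b).updateRow j (h i j)).det := by
    intro i j
    rcases eq_or_ne j i with rfl | hji
    · simp
    · simp [hji, hji.symm]
  have hcross : ∑ i, ∑ j, (if j = i then 0 else ((M.updateRow i b).updateRow j (h i j)).det)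
      = 0 := by
    refine Fintype.sum_sum_eq_zero_of_antisymm fun i j => ?_
    rcases eq_or_ne j i with rfl | hji
    · simp
    · simp only [if_neg hji, if_neg hji.symm, hh j i]
      exact det_updateRow_updateRow_swap M hji.symm b _
  simp only [hsplit, Finset.sum_add_distrib, Finset.sum_ite_eq, Finset.mem_univ, if_true, hcross,
    add_zero]

end Matrix

section DetDeriv

variable {𝕜 n E : Type*} [NontriviallyNormedField 𝕜] [DecidableEq n]
  [NormedAddCommGroup E] [NormedSpace 𝕜 E] {Φ : E → n → 𝕜}

-- For `V` the coordinate directions this is the transpose of the Jacobian: the columns `∂_k Φ`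
-- become rows, so that the determinant is multilinear in the directional derivatives.
noncomputable def dirJacobian (Φ : E → n → 𝕜) (V : n → E) (x : E) : Matrix n n 𝕜 :=
  Matrix.of fun i => fderiv 𝕜 Φ x (V i)

theorem dirJacobian_update (V : n → E) (i : n) (u : E) (x : E) :
    dirJacobian Φ (Function.update V i u) x = (dirJacobian Φ V x).updateRow i (fderiv 𝕜 Φ x u) := by
  ext j k
  rcases eq_or_ne j i with rfl | hji <;> simp [dirJacobian, Matrix.updateRow_apply, *]

variable [Fintype n]

noncomputable def Matrix.detRowContinuousMultilinear :
    ContinuousMultilinearMap 𝕜 (fun _ : n => n → 𝕜) 𝕜 :=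
  { (Matrix.detRowAlternating : (n → 𝕜) [⋀^n]→ₗ[𝕜] 𝕜).toMultilinearMap with
    cont := continuous_id.matrix_det }

theorem hasFDerivAt_det_of_rows {A : E → Matrix n n 𝕜} {A' : n → E →L[𝕜] n → 𝕜} {x : E}
    (hA : ∀ i, HasFDerivAt (fun y => A y i) (A' i) x) :
    HasFDerivAt (fun y => (A y).det)
      (∑ i, (Matrix.detRowContinuousMultilinear.toContinuousLinearMap (A x) i).comp (A' i)) x :=
  HasFDerivAt.multilinear_comp Matrix.detRowContinuousMultilinear hA

theorem fderiv_det_dirJacobian_apply {x : E} (hΦ : DifferentiableAt 𝕜 (fderiv 𝕜 Φ) x)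
    (V : n → E) (v : E) :
    fderiv 𝕜 (fun y => (dirJacobian Φ V y).det) x v
      = ∑ i, ((dirJacobian Φ V x).updateRow i (fderiv 𝕜 (fderiv 𝕜 Φ) x v (V i))).det := by
  have hrows : ∀ i, HasFDerivAt (fun y => dirJacobian Φ V y i)
      ((fderiv 𝕜 (fderiv 𝕜 Φ) x).flip (V i)) x := fun i => by
    have h := hΦ.hasFDerivAt.clm_apply (hasFDerivAt_const (V i) x)
    rw [ContinuousLinearMap.comp_zero, zero_add] at h
    exact h
  rw [(hasFDerivAt_det_of_rows hrows).fderiv]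
  simp only [FunLike.coe_sum, Finset.sum_apply]
  rfl

theorem contDiff_det_dirJacobian {k : WithTop ℕ∞} (hΦ : ContDiff 𝕜 (k + 1) Φ) (V : n → E) :
    ContDiff 𝕜 k fun y => (dirJacobian Φ V y).det := by
  have hrows : ContDiff 𝕜 k fun y i => fderiv 𝕜 Φ y (V i) :=
    contDiff_pi.2 fun i => (hΦ.fderiv_right le_rfl).clm_apply contDiff_const
  exact Matrix.detRowContinuousMultilinear.contDiff.comp hrows

-- The pull-back of the volume form by `Φ` is closed.
theorem sum_fderiv_det_dirJacobian_update [CharZero 𝕜] {x : E}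
    (hΦ : DifferentiableAt 𝕜 (fderiv 𝕜 Φ) x) (hsymm : IsSymmSndFDerivAt 𝕜 Φ x)
    (V : n → E) (u : E) :
    ∑ i, fderiv 𝕜 (fun y => (dirJacobian Φ (Function.update V i u) y).det) x (V i)
      = fderiv 𝕜 (fun y => (dirJacobian Φ V y).det) x u := by
  simp only [fderiv_det_dirJacobian_apply hΦ]
  simp only [dirJacobian_update, Function.update_apply, apply_ite (fderiv 𝕜 (fderiv 𝕜 Φ) x _)]
  rw [Matrix.sum_det_updateRow_updateRow _ _ _ _ fun i j => hsymm (V i) (V j)]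
  simp only [hsymm u]

end DetDeriv

section Slices

variable {𝕜 E₁ E₂ G : Type*} [NontriviallyNormedField 𝕜] [NormedAddCommGroup E₁]
  [NormedSpace 𝕜 E₁] [NormedAddCommGroup E₂] [NormedSpace 𝕜 E₂] [NormedAddCommGroup G]
  [NormedSpace 𝕜 G] {F : E₁ × E₂ → G} {a : E₁} {b : E₂}

theorem DifferentiableAt.fderiv_comp_prodMk_left_apply (hF : DifferentiableAt 𝕜 F (a, b))
    (v : E₂) : fderiv 𝕜 (fun y => F (a, y)) b v = fderiv 𝕜 F (a, b) (0, v) := by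
  have h : HasFDerivAt (fun y => F (a, y)) ((fderiv 𝕜 F (a, b)).comp (.inr 𝕜 E₁ E₂)) b :=
    hF.hasFDerivAt.comp b (hasFDerivAt_prodMk_right a b)
  rw [h.fderiv]
  rfl

theorem DifferentiableAt.hasDerivAt_comp_prodMk_right {F : 𝕜 × E₂ → G} {t : 𝕜}
    (hF : DifferentiableAt 𝕜 F (t, b)) :
    HasDerivAt (fun s => F (s, b)) (fderiv 𝕜 F (t, b) (1, 0)) t :=
  hF.hasFDerivAt.comp_hasDerivAt t ((hasDerivAt_id t).prodMk (hasDerivAt_const t b))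

end Slices

theorem measureReal_image_eq_integral_det {E : Type*} [NormedAddCommGroup E]
    [NormedSpace ℝ E] [FiniteDimensional ℝ E] [MeasurableSpace E] [BorelSpace E]
    (μ : Measure E) [μ.IsAddHaarMeasure] {s : Set E} {f : E → E} {f' : E → E →L[ℝ] E}
    (hs : MeasurableSet s) (hf' : ∀ x ∈ s, HasFDerivWithinAt f (f' x) s x) (hf : Set.InjOn f s)
    (hpos : ∀ x ∈ s, 0 < (f' x).det) :
    μ.real (f '' s) = ∫ x in s, (f' x).det ∂μ := by
  rw [← setIntegral_one_eq_measureReal, integral_image_eq_integral_abs_det_fderiv_smul μ hs hf' hf]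
  refine setIntegral_congr_fun hs fun x hx => ?_
  simp [abs_of_pos (hpos x hx)]

theorem hasDerivAt_setIntegral_of_contDiff {E G : Type*} [NormedAddCommGroup E]
    [NormedSpace ℝ E] [ProperSpace E] [MeasurableSpace E] [BorelSpace E]
    [NormedAddCommGroup G] [NormedSpace ℝ G] (μ : Measure E) [IsFiniteMeasureOnCompacts μ]
    {F : ℝ × E → G} (hF : ContDiff ℝ 1 F) {s : Set E} (hs : MeasurableSet s)
    (hbdd : Bornology.IsBounded s) (t : ℝ) :
    HasDerivAt (fun τ => ∫ y in s, F (τ, y) ∂μ) (∫ y in s, fderiv ℝ F (t, y) (1, 0) ∂μ) t := by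
  have hFc : ∀ τ, Continuous fun y => F (τ, y) := fun τ =>
    hF.continuous.comp (Continuous.prodMk_right τ)
  have hF'c : Continuous fun q => fderiv ℝ F q (1, 0) :=
    (hF.continuous_fderiv one_ne_zero).clm_apply continuous_const
  obtain ⟨C, hC⟩ := ((isCompact_closedBall t 1).prod
    hbdd.isCompact_closure).exists_bound_of_continuousOn hF'c.continuousOn
  have hbound : ∀ᵐ y ∂μ.restrict s, ∀ τ ∈ Metric.ball t 1, ‖fderiv ℝ F (τ, y) (1, 0)‖ ≤ C :=
    ae_restrict_of_forall_mem hs fun y hy τ hτ =>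
      hC (τ, y) ⟨Metric.ball_subset_closedBall hτ, subset_closure hy⟩
  refine (hasDerivAt_integral_of_dominated_loc_of_deriv_le (Metric.ball_mem_nhds t one_pos)
    (.of_forall fun τ => (hFc τ).aestronglyMeasurable)
    (((hFc t).continuousOn.integrableOn_compact hbdd.isCompact_closure).mono_set subset_closure)
    (hF'c.comp (Continuous.prodMk_right t)).aestronglyMeasurable hbound
    (integrableOn_const hbdd.measure_lt_top.ne)
    (.of_forall fun y τ _ => (hF.differentiable one_ne_zero _).hasDerivAt_comp_prodMk_right)).2

section Evolution

open scoped Matrix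

variable {d : ℕ}

theorem det_jacobian (f : (Fin d → ℝ) → Fin d → ℝ) (y : Fin d → ℝ) :
    (jacobian f y).det = (fderiv ℝ f y).det := by
  rw [ContinuousLinearMap.det, ← LinearMap.det_toMatrix']
  rfl

theorem toReal_volume_image_eq_integral_det_jacobian {f : (Fin d → ℝ) → Fin d → ℝ}
    {s : Set (Fin d → ℝ)} (hf : ∀ y ∈ s, DifferentiableAt ℝ f y) (hs : MeasurableSet s)
    (hinj : Set.InjOn f s) (hpos : ∀ y ∈ s, 0 < (jacobian f y).det) :
    (volume (f '' s)).toReal = ∫ y in s, (jacobian f y).det := by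
  simp only [det_jacobian] at hpos ⊢
  exact measureReal_image_eq_integral_det volume hs
    (fun y hy => (hf y hy).hasFDerivAt.hasFDerivWithinAt) hinj hpos

variable {ψ : ℝ → (Fin d → ℝ) → Fin d → ℝ}

theorem jacobian_eq_transpose_dirJacobian {s : ℝ} {y : Fin d → ℝ}
    (hψ : DifferentiableAt ℝ (Function.uncurry ψ) (s, y)) :
    jacobian (ψ s) y
      = (dirJacobian (Function.uncurry ψ) (fun k => (0, Pi.single k 1)) (s, y))ᵀ := by
  ext i j
  exact congrFun (hψ.fderiv_comp_prodMk_left_apply _) i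

theorem det_jacobian_eq_det_dirJacobian (hψ : Differentiable ℝ (Function.uncurry ψ)) :
    (fun q : ℝ × (Fin d → ℝ) => (jacobian (ψ q.1) q.2).det)
      = fun q => (dirJacobian (Function.uncurry ψ) (fun k => (0, Pi.single k 1)) q).det := by
  ext q
  rw [jacobian_eq_transpose_dirJacobian (hψ q), Matrix.det_transpose]

theorem contDiff_det_jacobian (hψ : ContDiff ℝ 2 (Function.uncurry ψ)) :
    ContDiff ℝ 1 fun q : ℝ × (Fin d → ℝ) => (jacobian (ψ q.1) q.2).det := by
  rw [det_jacobian_eq_det_dirJacobian (hψ.differentiable two_ne_zero)]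
  exact contDiff_det_dirJacobian hψ _

theorem adjugate_jacobian_mulVec_deriv (hψ : Differentiable ℝ (Function.uncurry ψ)) (t : ℝ)
    (z : Fin d → ℝ) (i : Fin d) :
    ((jacobian (ψ t) z).adjugate *ᵥ fun j => deriv (fun s => ψ s z j) t) i
      = (dirJacobian (Function.uncurry ψ)
          (Function.update (fun k => (0, Pi.single k 1)) i (1, 0)) (t, z)).det := by
  have hderiv :
      (fun j => deriv (fun s => ψ s z j) t) = fderiv ℝ (Function.uncurry ψ) (t, z) (1, 0) :=
    funext fun j => (hasDerivAt_pi.1 (hψ (t, z)).hasDerivAt_comp_prodMk_right j).deriv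
  rw [hderiv, jacobian_eq_transpose_dirJacobian (hψ _), ← Matrix.cramer_eq_adjugate_mulVec,
    Matrix.cramer_transpose_apply, dirJacobian_update]

theorem vdiv_adjugate_jacobian_mulVec (hψ : ContDiff ℝ 2 (Function.uncurry ψ)) (t : ℝ)
    (y : Fin d → ℝ) :
    vdiv (fun z => (jacobian (ψ t) z).adjugate *ᵥ fun j => deriv (fun s => ψ s z j) t) y
      = fderiv ℝ (fun q : ℝ × (Fin d → ℝ) => (jacobian (ψ q.1) q.2).det) (t, y) (1, 0) := by
  have hdiff := hψ.differentiable two_ne_zero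
  have hsecond : DifferentiableAt ℝ (fderiv ℝ (Function.uncurry ψ)) (t, y) :=
    (hψ.fderiv_right le_rfl).differentiable one_ne_zero _
  have hsymm := hψ.contDiffAt.isSymmSndFDerivAt (x := (t, y)) (by simp)
  rw [det_jacobian_eq_det_dirJacobian hdiff,
    ← sum_fderiv_det_dirJacobian_update hsecond hsymm _ (1, 0), vdiv]
  simp only [adjugate_jacobian_mulVec_deriv hdiff]
  refine Finset.sum_congr rfl fun i _ => ?_
  rw [DifferentiableAt.fderiv_comp_prodMk_left_apply
    ((contDiff_det_dirJacobian hψ _).differentiable one_ne_zero _)]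

end Evolution

theorem volume_evolving_domain_general {d : ℕ}
    (ψ : ℝ → (Fin d → ℝ) → (Fin d → ℝ))
    (hψ : ContDiff ℝ 2 (fun p : ℝ × (Fin d → ℝ) => ψ p.1 p.2))
    (Ystar : Set (Fin d → ℝ)) (hmeas : MeasurableSet Ystar)
    (hbdd : Bornology.IsBounded Ystar)
    (hinj : ∀ t : ℝ, Set.InjOn (ψ t) Ystar)
    (hdet : ∀ t : ℝ, ∀ y ∈ Ystar, 0 < (jacobian (ψ t) y).det) :
    ∀ t : ℝ,
      (volume (ψ t '' Ystar)).toReal = ∫ y in Ystar, (jacobian (ψ t) y).det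
      ∧ HasDerivAt (fun s => (volume (ψ s '' Ystar)).toReal)
          (∫ y in Ystar,
            vdiv (fun z =>
              (Matrix.adjugate (jacobian (ψ t) z)).mulVec
                (fun j => deriv (fun s => ψ s z j) t)) y) t := by
  have hvol : ∀ s, (volume (ψ s '' Ystar)).toReal = ∫ y in Ystar, (jacobian (ψ s) y).det :=
    fun s => toReal_volume_image_eq_integral_det_jacobian
      (fun y _ => (hψ.comp (contDiff_prodMk_right s)).differentiable two_ne_zero y) hmeas
      (hinj s) (hdet s)
  intro t
  refine ⟨hvol t, ?_⟩
  simp only [hvol, vdiv_adjugate_jacobian_mulVec hψ t]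
  exact hasDerivAt_setIntegral_of_contDiff volume (contDiff_det_jacobian hψ) hmeas hbdd t

/-- **Rate of change of the volume of an evolving domain**: for a twice continuously
differentiable evolution `ψ : ℝ × ℝ^d → ℝ^d` that is injective on a bounded measurable
set `Y*` with positive Jacobian determinant there, the Lebesgue measure `Θ(t)` of
`ψ(t,Y*)` equals `∫_{Y*} det(D_yψ(t,y)) dy`, and `Θ` is differentiable with
`Θ'(t) = ∫_{Y*} div_y( Adj(D_yψ(t,·)) ∂_tψ(t,·) )(y) dy`. -/
theorem volume_evolving_domain {d : ℕ} (hd : 1 ≤ d)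
    (ψ : ℝ → (Fin d → ℝ) → (Fin d → ℝ))
    (hψ : ContDiff ℝ 2 (fun p : ℝ × (Fin d → ℝ) => ψ p.1 p.2))
    (Ystar : Set (Fin d → ℝ)) (hmeas : MeasurableSet Ystar)
    (hbdd : Bornology.IsBounded Ystar)
    (hinj : ∀ t : ℝ, Set.InjOn (ψ t) Ystar)
    (hdet : ∀ t : ℝ, ∀ y ∈ Ystar, 0 < (jacobian (ψ t) y).det) :
    ∀ t : ℝ,
      (volume (ψ t '' Ystar)).toReal = ∫ y in Ystar, (jacobian (ψ t) y).det
      ∧ HasDerivAt (fun s => (volume (ψ s '' Ystar)).toReal)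
          (∫ y in Ystar,
            vdiv (fun z =>
              (Matrix.adjugate (jacobian (ψ t) z)).mulVec
                (fun j => deriv (fun s => ψ s z j) t)) y) t :=
  volume_evolving_domain_general ψ hψ Ystar hmeas hbdd hinj hdet
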